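/- Let n ≥ 1 and set δ_n = (X_n + 2)/(X_n − 2) ∈ ℝ. Then there exist p, q ∈ ℤ[X_{n-1}] such that δ_n = p + X_n·q and p² − X_n²·q² = 1 (i.e. δ_n lies in ℤ[X_n] and has relative norm 1 to ℚ(X_{n-1}), so δ_n ∈ RE_n⁺). -/
import Mathlib

/-- `X n = 2 cos(2π/2^(n+2))`. -/
noncomputable def X (n : ℕ) : ℝ := 2 * Real.cos (2 * Real.pi / 2 ^ (n + 2))

lemma X_zero : X 0 = 0 := by
  have : (2 : ℝ) * Real.pi / 2 ^ (0 + 2) = Real.pi / 2 := by ring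
  simp [X, this, Real.cos_pi_div_two]

lemma X_sq (m : ℕ) : X (m + 1) ^ 2 = 2 + X m := by
  have h : (2 : ℝ) * Real.pi / 2 ^ (m + 2) =
      2 * (2 * Real.pi / 2 ^ (m + 1 + 2)) := by
    rw [pow_succ]; ring
  rw [X, X, h, Real.cos_two_mul]; ring

lemma X_lt_two (n : ℕ) : X n < 2 := by
  have hθpos : 0 < 2 * Real.pi / 2 ^ (n + 2) := by positivity
  have h2 : (2:ℝ) < 2 ^ (n + 2) := by
    have : (2:ℝ)^1 < 2 ^ (n+2) := by
      apply pow_lt_pow_right₀ one_lt_two; omega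
    simpa using this
  have hθlt : 2 * Real.pi / 2 ^ (n + 2) < 2 * Real.pi := by
    apply div_lt_self (by positivity); linarith
  have hne : Real.cos (2 * Real.pi / 2 ^ (n + 2)) ≠ 1 := by
    simp only [ne_eq, Real.cos_eq_one_iff_of_lt_of_lt (by linarith) hθlt]
    exact hθpos.ne'
  have := lt_of_le_of_ne (Real.cos_le_one _) hne
  unfold X; linarith

lemma X_mem (m j : ℕ) : X m ∈ Algebra.adjoin ℤ ({X (m + j)} : Set ℝ) := by
  induction j with
  | zero => exact Algebra.self_mem_adjoin_singleton ℤ _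
  | succ j ih =>
    have hmem : X (m + j) ∈ Algebra.adjoin ℤ ({X (m + j + 1)} : Set ℝ) := by
      have hx := Algebra.self_mem_adjoin_singleton ℤ (X (m + j + 1))
      have : X (m + j) = X (m + j + 1) ^ 2 - 2 := by rw [X_sq]; ring
      rw [this]
      exact sub_mem (pow_mem hx 2) (by exact_mod_cast Subalgebra.natCast_mem _ 2)
    have hle : Algebra.adjoin ℤ ({X (m + j)} : Set ℝ) ≤
        Algebra.adjoin ℤ ({X (m + j + 1)} : Set ℝ) :=
      Algebra.adjoin_le (Set.singleton_subset_iff.mpr hmem)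
    exact (show m + (j+1) = m + j + 1 by ring) ▸ hle ih

lemma telescope (n : ℕ) :
    (2 - X n) * ∏ k ∈ Finset.range n, (2 + X (k + 1)) = 2 := by
  induction n with
  | zero => simp [X_zero]
  | succ n ih =>
    rw [Finset.prod_range_succ]
    have h := X_sq n
    linear_combination ih - (∏ k ∈ Finset.range n, (2 + X (k + 1))) * h

theorem stmt9 (n : ℕ) (hn : 1 ≤ n) :
    ∃ p q : ℝ, p ∈ Algebra.adjoin ℤ ({X (n - 1)} : Set ℝ) ∧
      q ∈ Algebra.adjoin ℤ ({X (n - 1)} : Set ℝ) ∧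
      (X n + 2) / (X n - 2) = p + X n * q ∧
      p ^ 2 - X n ^ 2 * q ^ 2 = 1 := by
  obtain ⟨m, rfl⟩ : ∃ m, n = m + 1 := ⟨n - 1, by omega⟩
  simp only [Nat.add_sub_cancel]
  have hqmem : (-2 : ℝ) * ∏ k ∈ Finset.range m, (2 + X (k + 1)) ∈
      Algebra.adjoin ℤ ({X m} : Set ℝ) := by
    apply mul_mem
    · exact_mod_cast Subalgebra.intCast_mem _ (-2)
    · apply prod_mem
      intro k hk
      apply add_mem (by exact_mod_cast Subalgebra.natCast_mem _ 2)
      have hk' : k + 1 + (m - (k + 1)) = m := by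
        have := Finset.mem_range.mp hk; omega
      exact hk' ▸ X_mem (k + 1) (m - (k + 1))
  refine ⟨1 + 2 * (-2 * ∏ k ∈ Finset.range m, (2 + X (k + 1))),
    -2 * ∏ k ∈ Finset.range m, (2 + X (k + 1)),
    add_mem (one_mem _) (mul_mem (by exact_mod_cast Subalgebra.natCast_mem _ 2) hqmem),
    hqmem, ?_, ?_⟩
  · have h2 := telescope (m + 1)
    rw [Finset.prod_range_succ] at h2
    have hne : X (m + 1) - 2 ≠ 0 := sub_ne_zero.mpr (X_lt_two (m+1)).ne
    field_simp
    linear_combination (-2) * h2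
  · have h1 := telescope m
    have h2 := X_sq m
    linear_combination 4 * (∏ k ∈ Finset.range m, (2 + X (k + 1))) * h1 -
      4 * (∏ k ∈ Finset.range m, (2 + X (k + 1)))^2 * h2
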